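/- arXiv:2003.09399 — 2 statements merged into one kernel-verified Lean document; each statement's English description precedes it below -/
import Mathlib

section
/- Suppose θ₁₁, θ₁₂, θ₂₁, θ₂₂ in the unit ball of H^∞ satisfy |θ₁₁|²+|θ₁₂|²=1, |θ₂₁|²+|θ₂₂|²=1 and θ₁₁θ₂₁+θ₁₂θ₂₂=0 a.e. on 𝕋. Then the subspace Y = { (θ₂₁u₁ + θ₂₂u₂) ⊕ P₋(\overline{θ₁₁}u₁ + \overline{θ₁₂}u₂) : u₁, u₂ ∈ H² } of H² ⊕ H²₋ is invariant under S ⊕ S₊. -/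
open MeasureTheory Complex Real
open scoped ComplexConjugate ENNReal

noncomputable section

namespace SS

abbrev T : ℝ := 2 * Real.pi

instance : Fact (0 < T) := ⟨by positivity⟩

/-- Normalized Haar (Lebesgue) measure on the circle. -/
abbrev μ : Measure (AddCircle T) := AddCircle.haarAddCircle

/-- The space `L²` of the circle. -/
abbrev L2 := Lp ℂ 2 μ

/-- The Hardy space `H²`: the closed span of the nonnegative Fourier modes. -/
def H2 : Submodule ℂ L2 :=
  (Submodule.span ℂ {f : L2 | ∃ n : ℕ, f = fourierLp 2 (n : ℤ)}).topologicalClosure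

instance : CompleteSpace H2 :=
  (Submodule.isClosed_topologicalClosure _).completeSpace_coe

/-- `H²₋ = L² ⊖ H²`. -/
def H2m : Submodule ℂ L2 := H2ᗮ

instance : CompleteSpace H2m :=
  (Submodule.isClosed_orthogonal H2).completeSpace_coe

/-- Orthogonal projection `P₊` of `L²` onto `H²`, seen as an operator on `L²`. -/
def Pplus : L2 →ₗ[ℂ] L2 := H2.subtype.comp H2.orthogonalProjectionOnto.toLinearMap

/-- Orthogonal projection `P₋` of `L²` onto `H²₋`, seen as an operator on `L²`. -/
def Pminus : L2 →ₗ[ℂ] L2 := H2m.subtype.comp H2m.orthogonalProjectionOnto.toLinearMap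

theorem memL2_mul_of_bound {φ : AddCircle T → ℂ} (hm : AEStronglyMeasurable φ μ)
    {C : ℝ} (hb : ∀ᵐ t ∂μ, ‖φ t‖ ≤ C) (f : L2) :
    MemLp (fun t => φ t * (f : AddCircle T → ℂ) t) 2 μ := by
  have h1 : MemLp φ ∞ μ := memLp_top_of_bound hm C hb
  simpa [smul_eq_mul] using (Lp.memLp f).mul' (r := 2) h1

/-- Multiplication by a bounded measurable function, as an operator on `L²`. -/
def mulOp (φ : AddCircle T → ℂ) (hm : AEStronglyMeasurable φ μ)
    {C : ℝ} (hb : ∀ᵐ t ∂μ, ‖φ t‖ ≤ C) : L2 →ₗ[ℂ] L2 where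
  toFun f := (memL2_mul_of_bound hm hb f).toLp _
  map_add' f g := by
    apply Lp.ext
    filter_upwards [MemLp.coeFn_toLp (memL2_mul_of_bound hm hb (f + g)),
      MemLp.coeFn_toLp (memL2_mul_of_bound hm hb f),
      MemLp.coeFn_toLp (memL2_mul_of_bound hm hb g),
      Lp.coeFn_add ((memL2_mul_of_bound hm hb f).toLp _)
        ((memL2_mul_of_bound hm hb g).toLp _),
      Lp.coeFn_add f g] with t h1 h2 h3 h4 h5
    simp only [h1, h4, Pi.add_apply, h2, h3, h5]
    ring
  map_smul' c f := by
    apply Lp.ext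
    filter_upwards [MemLp.coeFn_toLp (memL2_mul_of_bound hm hb (c • f)),
      MemLp.coeFn_toLp (memL2_mul_of_bound hm hb f),
      Lp.coeFn_smul c ((memL2_mul_of_bound hm hb f).toLp _),
      Lp.coeFn_smul c f] with t h1 h2 h3 h4
    simp only [RingHom.id_apply, h1, h3, Pi.smul_apply, h2, h4, smul_eq_mul]
    ring

/-- The function `e^{it}` on the circle. -/
def φz : AddCircle T → ℂ := fun t => fourier 1 t

theorem φz_meas : AEStronglyMeasurable φz μ := (fourier 1).continuous.aestronglyMeasurable

theorem φz_bound : ∀ᵐ t ∂μ, ‖φz t‖ ≤ 1 :=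
  Filter.Eventually.of_forall fun t => le_of_eq (Circle.norm_coe _)

/-- Multiplication by `z = e^{it}` on `L²`. -/
def Mz : L2 →ₗ[ℂ] L2 := mulOp φz φz_meas φz_bound

/-- The operator `S ⊕ S₊` on `L² = H² ⊕ H²₋` (internal orthogonal decomposition):
it acts as `Mz` on the `H²`-component and as `P₋ Mz` on the `H²₋`-component. -/
def D : L2 →ₗ[ℂ] L2 := Mz.comp Pplus + (Pminus.comp (Mz.comp Pminus))

/-- The set `φ·M ⊆ L²`, for a function `φ` on the circle and a set `M ⊆ L²`,
defined via a.e. representatives. -/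
def mulSet (φ : AddCircle T → ℂ) (M : Set L2) : Set L2 :=
  {g | ∃ f ∈ M, ⇑g =ᵐ[μ] fun t => φ t * f t}

/-- The model space `K_θ = H² ⊖ θH²`, as a subset of `L²`. -/
def Kset (θ : AddCircle T → ℂ) : Set L2 :=
  {f | f ∈ H2 ∧ ∀ g ∈ mulSet θ (H2 : Set L2), inner (𝕜 := ℂ) g f = 0}

/-- `θ` is (the boundary function of) an inner function: it is measurable, its negative
Fourier coefficients vanish (i.e. it belongs to `H²`, hence to `H^∞`), and it has
unimodular boundary values a.e. -/
structure IsInner (θ : AddCircle T → ℂ) : Prop where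
  meas : AEStronglyMeasurable θ μ
  coeff : ∀ n : ℤ, n < 0 → fourierCoeff θ n = 0
  unimod : ∀ᵐ t ∂μ, ‖θ t‖ = 1

/-- `φ` is (the boundary function of) an element of the closed unit ball of `H^∞`. -/
structure MemBallHinf (φ : AddCircle T → ℂ) : Prop where
  meas : AEStronglyMeasurable φ μ
  coeff : ∀ n : ℤ, n < 0 → fourierCoeff φ n = 0
  bound : ∀ᵐ t ∂μ, ‖φ t‖ ≤ 1

theorem IsInner.memBall {θ : AddCircle T → ℂ} (h : IsInner θ) : MemBallHinf θ :=
  ⟨h.meas, h.coeff, h.unimod.mono fun _ ht => le_of_eq ht⟩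

theorem aeNeg {g g' : AddCircle T → ℂ} (h : g =ᵐ[μ] g') :
    (fun t => g (-t)) =ᵐ[μ] fun t => g' (-t) :=
  (Measure.measurePreserving_neg μ).quasiMeasurePreserving.ae_eq_comp h

theorem memL2_J (f : L2) :
    MemLp (fun t => (fourier (-1) t : ℂ) * (f : L2) (-t)) 2 μ := by
  have h1 : MemLp (fun t : AddCircle T => (f : L2) (-t)) 2 μ :=
    (Lp.memLp f).comp_measurePreserving (Measure.measurePreserving_neg μ)
  have h2 : MemLp (fun t : AddCircle T => (fourier (-1) t : ℂ)) ∞ μ :=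
    memLp_top_of_bound (fourier (-1)).continuous.aestronglyMeasurable 1
      (Filter.Eventually.of_forall fun _ => le_of_eq (Circle.norm_coe _))
  simpa [smul_eq_mul] using h1.mul' (r := 2) h2

/-- The operator `J` on `L²`: `(Jf)(e^{it}) = e^{-it} f(e^{-it})`. -/
def Jop : L2 →ₗ[ℂ] L2 where
  toFun f := (memL2_J f).toLp _
  map_add' f g := by
    apply Lp.ext
    filter_upwards [MemLp.coeFn_toLp (memL2_J (f + g)), MemLp.coeFn_toLp (memL2_J f),
      MemLp.coeFn_toLp (memL2_J g),
      Lp.coeFn_add ((memL2_J f).toLp _) ((memL2_J g).toLp _),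
      aeNeg (Lp.coeFn_add f g)] with t h1 h2 h3 h4 h5
    simp only [h1, h4, Pi.add_apply, h2, h3, h5]
    ring
  map_smul' c f := by
    apply Lp.ext
    filter_upwards [MemLp.coeFn_toLp (memL2_J (c • f)), MemLp.coeFn_toLp (memL2_J f),
      Lp.coeFn_smul c ((memL2_J f).toLp _),
      aeNeg (Lp.coeFn_smul c f)] with t h1 h2 h3 h4
    simp only [RingHom.id_apply, h1, h3, Pi.smul_apply, h2, h4, smul_eq_mul]
    ring

/-- The subspace `Y = {(θ₂₁u₁+θ₂₂u₂) ⊕ P₋(conj θ₁₁ u₁ + conj θ₁₂ u₂) : u₁,u₂ ∈ H²}`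
inside `L² = H² ⊕ H²₋` (internal orthogonal decomposition). -/
def YSet (θ11 θ12 θ21 θ22 : AddCircle T → ℂ) : Set L2 :=
  {y | ∃ u1 ∈ (H2 : Set L2), ∃ u2 ∈ (H2 : Set L2), ∃ g h : L2, g ∈ H2 ∧
    (⇑g =ᵐ[μ] fun t => θ21 t * u1 t + θ22 t * u2 t) ∧
    (⇑h =ᵐ[μ] fun t => (starRingEnd ℂ) (θ11 t) * u1 t + (starRingEnd ℂ) (θ12 t) * u2 t) ∧
    y = g + Pminus h}

/-- `g` is (the boundary function of) an outer function:
`log |g(0)| = ∫ log |g| dm`, where `g(0)` is the 0-th Fourier coefficient. -/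
structure IsOuter (g : AddCircle T → ℂ) : Prop where
  meas : AEStronglyMeasurable g μ
  coeff : ∀ n : ℤ, n < 0 → fourierCoeff g n = 0
  ne_zero : ¬ g =ᵐ[μ] 0
  outer : Real.log ‖fourierCoeff g 0‖ = ∫ t, Real.log ‖g t‖ ∂μ



theorem Mz_ae (f : L2) : ⇑(Mz f) =ᵐ[μ] fun t => φz t * f t :=
  MemLp.coeFn_toLp (memL2_mul_of_bound φz_meas φz_bound f)

theorem Mz_norm (f : L2) : ‖Mz f‖ = ‖f‖ := by
  have h1 : ‖Mz f‖ = (eLpNorm (fun t => φz t * (f : AddCircle T → ℂ) t) 2 μ).toReal := by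
    rw [show Mz f = (memL2_mul_of_bound φz_meas φz_bound f).toLp _ from rfl]
    exact Lp.norm_toLp _ (memL2_mul_of_bound φz_meas φz_bound f)
  rw [h1, Lp.norm_def]
  congr 1
  apply eLpNorm_congr_norm_ae
  filter_upwards with t
  have : ‖φz t‖ = 1 := Circle.norm_coe _
  rw [norm_mul, this, one_mul]

theorem Mz_continuous : Continuous Mz :=
  AddMonoidHomClass.continuous_of_bound Mz 1 fun f => by rw [Mz_norm, one_mul]

theorem Mz_fourierLp (n : ℤ) : Mz (fourierLp 2 n) = fourierLp 2 (n + 1) := by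
  apply Lp.ext
  filter_upwards [Mz_ae (fourierLp 2 n), coeFn_fourierLp (T := T) 2 n,
    coeFn_fourierLp (T := T) 2 (n + 1)] with t h1 h2 h3
  rw [h1, h2, h3, φz, show (n + 1 : ℤ) = 1 + n by ring, fourier_add]

theorem Mz_mem_H2 {f : L2} (hf : f ∈ H2) : Mz f ∈ H2 := by
  set Sgen : Set L2 := {f : L2 | ∃ n : ℕ, f = fourierLp 2 (n : ℤ)} with hSgen
  have hsub : Mz '' ↑(Submodule.span ℂ Sgen) ⊆ ↑(Submodule.span ℂ Sgen) := by
    have : Submodule.map Mz (Submodule.span ℂ Sgen) ≤ Submodule.span ℂ Sgen := by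
      rw [Submodule.map_span]
      apply Submodule.span_mono
      rintro x ⟨y, ⟨n, rfl⟩, rfl⟩
      exact ⟨n + 1, by rw [Mz_fourierLp]; norm_cast⟩
    intro x hx
    exact this (by simpa [Submodule.mem_map] using hx)
  have hf' : f ∈ closure (↑(Submodule.span ℂ Sgen) : Set L2) := by
    rw [← Submodule.topologicalClosure_coe]; exact hf
  have : Mz f ∈ closure (Mz '' ↑(Submodule.span ℂ Sgen)) :=
    image_closure_subset_closure_image Mz_continuous ⟨f, hf', rfl⟩
  have := closure_mono hsub this
  rw [← Submodule.topologicalClosure_coe] at this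
  exact this

theorem Pplus_mem (x : L2) : Pplus x ∈ H2 := (H2.orthogonalProjectionOnto x).2

theorem Pminus_mem (x : L2) : Pminus x ∈ H2m := (H2m.orthogonalProjectionOnto x).2

theorem Pplus_of_mem {x : L2} (hx : x ∈ H2) : Pplus x = x := by
  show (H2.subtype) (H2.orthogonalProjectionOnto x) = x
  rw [show x = ((⟨x, hx⟩ : H2) : L2) from rfl, Submodule.orthogonalProjectionOnto_mem_subspace_eq_self]
  rfl

theorem Pplus_of_mem_m {x : L2} (hx : x ∈ H2m) : Pplus x = 0 := by
  show (H2.subtype) (H2.orthogonalProjectionOnto x) = 0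
  rw [Submodule.orthogonalProjectionOnto_apply_of_mem_orthogonal hx]
  rfl

theorem Pminus_of_mem {x : L2} (hx : x ∈ H2m) : Pminus x = x := by
  show (H2m.subtype) (H2m.orthogonalProjectionOnto x) = x
  rw [show x = ((⟨x, hx⟩ : H2m) : L2) from rfl, Submodule.orthogonalProjectionOnto_mem_subspace_eq_self]
  rfl

theorem Pminus_of_mem_H2 {x : L2} (hx : x ∈ H2) : Pminus x = 0 := by
  have hx' : x ∈ H2mᗮ := H2.le_orthogonal_orthogonal hx
  show (H2m.subtype) (H2m.orthogonalProjectionOnto x) = 0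
  rw [Submodule.orthogonalProjectionOnto_apply_of_mem_orthogonal hx']
  rfl

theorem Pplus_add_Pminus (x : L2) : Pplus x + Pminus x = x :=
  Submodule.starProjection_add_starProjection_orthogonal (K := H2) x

/-- under the unitarity conditions, the subspace `Y` is invariant
under `S ⊕ S₊`. -/
theorem stmt8_Y_invariant (θ11 θ12 θ21 θ22 : AddCircle T → ℂ)
    (h11 : MemBallHinf θ11) (h12 : MemBallHinf θ12)
    (h21 : MemBallHinf θ21) (h22 : MemBallHinf θ22)
    (hu1 : ∀ᵐ t ∂μ, ‖θ11 t‖ ^ 2 + ‖θ12 t‖ ^ 2 = 1)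
    (hu2 : ∀ᵐ t ∂μ, ‖θ21 t‖ ^ 2 + ‖θ22 t‖ ^ 2 = 1)
    (hu3 : ∀ᵐ t ∂μ, θ11 t * θ21 t + θ12 t * θ22 t = 0) :
    ∀ y ∈ YSet θ11 θ12 θ21 θ22, D y ∈ YSet θ11 θ12 θ21 θ22 := by
  rintro y ⟨u1, hmu1, u2, hmu2, g, h, hg, hgae, hhae, rfl⟩
  have hPh := Pminus_mem h
  have hDy : D (g + Pminus h) = Mz g + Pminus (Mz h) := by
    have h1 : Pplus (g + Pminus h) = g := by
      rw [map_add, Pplus_of_mem hg, Pplus_of_mem_m hPh, add_zero]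
    have h2 : Pminus (g + Pminus h) = Pminus h := by
      rw [map_add, Pminus_of_mem_H2 hg, Pminus_of_mem hPh, zero_add]
    have h3 : Pminus (Mz (Pminus h)) = Pminus (Mz h) := by
      conv_rhs => rw [← Pplus_add_Pminus h]
      rw [map_add, map_add, Pminus_of_mem_H2 (Mz_mem_H2 (Pplus_mem h)), zero_add]
    simp only [D, LinearMap.add_apply, LinearMap.comp_apply, h1, h2, h3]
  rw [hDy]
  refine ⟨Mz u1, Mz_mem_H2 hmu1, Mz u2, Mz_mem_H2 hmu2, Mz g, Mz h, Mz_mem_H2 hg, ?_, ?_, rfl⟩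
  · filter_upwards [Mz_ae g, Mz_ae u1, Mz_ae u2, hgae] with t h1 h2 h3 h4
    rw [h1, h4, h2, h3]; ring
  · filter_upwards [Mz_ae h, Mz_ae u1, Mz_ae u2, hhae] with t h1 h2 h3 h4
    rw [h1, h4, h2, h3]; ring

end SS
end
end

section
/- The only subspaces of H² ⊕ H²₋ that reduce the operator S ⊕ S₊ (i.e., are invariant together with their orthogonal complement) are {0}, H² ⊕ {0}, {0} ⊕ H²₋, and the whole space. -/
open MeasureTheory Complex Real
open scoped ComplexConjugate ENNReal

noncomputable section

namespace SS

local notation "⟪" x ", " y "⟫" => @inner ℂ _ _ x y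

/-- The Fourier basis vectors as elements of `L2`. -/
abbrev e (n : ℤ) : L2 := fourierLp 2 n

theorem inner_e (m n : ℤ) : ⟪e m, e n⟫ = if m = n then 1 else 0 :=
  orthonormal_iff_ite.1 (orthonormal_fourier (T := T)) m n

theorem e_ne_zero (m : ℤ) : e m ≠ 0 := by
  intro h
  have h1 := inner_e m m
  rw [h, inner_zero_left, if_pos rfl] at h1
  exact zero_ne_one h1

theorem ext_of_inner {x y : L2} (h : ∀ m : ℤ, ⟪e m, x⟫ = ⟪e m, y⟫) : x = y := by
  apply (fourierBasis (T := T)).repr.injective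
  ext i
  rw [HilbertBasis.repr_apply_apply, HilbertBasis.repr_apply_apply, coe_fourierBasis]
  exact h i

theorem inner_Mz (m : ℤ) (y : L2) : ⟪e m, Mz y⟫ = ⟪e (m - 1), y⟫ := by
  rw [MeasureTheory.L2.inner_def, MeasureTheory.L2.inner_def]
  apply integral_congr_ae
  have hMz : ⇑(Mz y) =ᵐ[μ] fun t => φz t * (y : AddCircle T → ℂ) t :=
    MemLp.coeFn_toLp (memL2_mul_of_bound φz_meas φz_bound y)
  filter_upwards [hMz, coeFn_fourierLp (T := T) 2 m, coeFn_fourierLp (T := T) 2 (m - 1)]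
    with t h1 h2 h3
  rw [h1, h2, h3]
  simp only [RCLike.inner_apply]
  rw [mul_comm (φz t * _), mul_comm ((y : AddCircle T → ℂ) t)]
  have key : (starRingEnd ℂ) (fourier m t) * φz t = (starRingEnd ℂ) (fourier (m - 1) t) := by
    rw [← fourier_neg, ← fourier_neg, φz, ← fourier_add]
    congr 1
    ring
  calc (starRingEnd ℂ) ((fourier m : AddCircle T → ℂ) t) * (φz t * (y : AddCircle T → ℂ) t)
      = ((starRingEnd ℂ) (fourier m t) * φz t) * (y : AddCircle T → ℂ) t := by ring
    _ = (starRingEnd ℂ) ((fourier (m - 1) : AddCircle T → ℂ) t) * (y : AddCircle T → ℂ) t := by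
        rw [key]

theorem inner_proj_of_mem {W : Submodule ℂ L2} [CompleteSpace W] {v : L2} (hv : v ∈ W)
    (y : L2) : ⟪v, (W.orthogonalProjectionOnto y : L2)⟫ = ⟪v, y⟫ := by
  have h := Submodule.sub_starProjection_mem_orthogonal (K := W) y
  have h0 : ⟪v, y - (W.orthogonalProjectionOnto y : L2)⟫ = 0 := (W.mem_orthogonal _).1 h v hv
  rw [inner_sub_right, sub_eq_zero] at h0
  exact h0.symm

theorem inner_proj_of_orth {W : Submodule ℂ L2} [CompleteSpace W] {v : L2} (hv : v ∈ Wᗮ)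
    (y : L2) : ⟪v, (W.orthogonalProjectionOnto y : L2)⟫ = 0 :=
  (W.mem_orthogonal' v).1 hv _ (W.orthogonalProjectionOnto y).2

theorem e_mem_H2 {m : ℤ} (hm : 0 ≤ m) : e m ∈ H2 := by
  apply Submodule.le_topologicalClosure
  exact Submodule.subset_span ⟨m.toNat, by rw [Int.toNat_of_nonneg hm]⟩

theorem e_mem_H2_orth {m : ℤ} (hm : m < 0) : e m ∈ H2ᗮ := by
  rw [Submodule.mem_orthogonal]
  intro u hu
  have hker : H2 ≤ LinearMap.ker (innerSL ℂ (e m) : L2 →ₗ[ℂ] ℂ) := by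
    apply Submodule.topologicalClosure_minimal
    · rw [Submodule.span_le]
      rintro f ⟨n, rfl⟩
      simp only [SetLike.mem_coe, LinearMap.mem_ker, ContinuousLinearMap.coe_coe, innerSL_apply_apply]
      rw [show ((fourierLp 2 (n : ℤ) : L2)) = e (n : ℤ) from rfl, inner_e,
        if_neg (by omega : m ≠ (n : ℤ))]
    · exact ContinuousLinearMap.isClosed_ker (innerSL ℂ (e m))
  have h2 : ⟪e m, u⟫ = 0 := hker hu
  rw [← inner_conj_symm, h2, map_zero]

theorem inner_Pplus (m : ℤ) (y : L2) :
    ⟪e m, Pplus y⟫ = if 0 ≤ m then ⟪e m, y⟫ else 0 := by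
  have : Pplus y = (H2.orthogonalProjectionOnto y : L2) := rfl
  rw [this]
  split_ifs with h
  · exact inner_proj_of_mem (e_mem_H2 h) y
  · exact inner_proj_of_orth (e_mem_H2_orth (lt_of_not_ge h)) y

theorem inner_Pminus (m : ℤ) (y : L2) :
    ⟪e m, Pminus y⟫ = if m < 0 then ⟪e m, y⟫ else 0 := by
  have : Pminus y = (H2m.orthogonalProjectionOnto y : L2) := rfl
  rw [this]
  split_ifs with h
  · exact inner_proj_of_mem (e_mem_H2_orth h) y
  · exact inner_proj_of_orth (Submodule.le_orthogonal_orthogonal H2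
      (e_mem_H2 (le_of_not_gt h))) y

theorem inner_D (m : ℤ) (y : L2) :
    ⟪e m, D y⟫ = if m = 0 then 0 else ⟪e (m - 1), y⟫ := by
  have hD : D y = Mz (Pplus y) + Pminus (Mz (Pminus y)) := rfl
  rw [hD, inner_add_right, inner_Mz, inner_Pplus, inner_Pminus]
  rcases lt_trichotomy m 0 with h | h | h
  · rw [if_neg (by omega), if_pos h, inner_Mz, inner_Pminus, if_pos (by omega : m - 1 < 0),
      if_neg (by omega : m ≠ 0), zero_add]
  · subst h
    rw [if_neg (by omega), if_neg (by omega), if_pos rfl, add_zero]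
  · rw [if_pos (by omega : (0:ℤ) ≤ m - 1), if_neg (by omega), if_neg (by omega : ¬ m = 0),
      add_zero]

theorem D_e (k : ℤ) : D (e k) = if k = -1 then 0 else e (k + 1) := by
  apply ext_of_inner
  intro m
  rw [inner_D]
  by_cases hk : k = -1
  · subst hk
    rw [if_pos rfl, inner_zero_right]
    split_ifs with h
    · rfl
    · rw [inner_e, if_neg (by omega)]
  · rw [if_neg hk, inner_e]
    by_cases h1 : m = 0
    · rw [if_pos h1, inner_e, if_neg (by omega)]
    · rw [if_neg h1, inner_e]
      by_cases h2 : m = k + 1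
      · rw [if_pos (by omega : m - 1 = k), if_pos h2]
      · rw [if_neg (by omega : ¬ m - 1 = k), if_neg h2]

/-- the only reducing subspaces of `S ⊕ S₊` are `{0}`, `H²`, `H²₋`
and the whole space. -/
theorem stmt13_reducing (Y : Submodule ℂ L2) (hc : IsClosed (Y : Set L2))
    (hY : ∀ f ∈ Y, D f ∈ Y) (hY' : ∀ f ∈ Yᗮ, D f ∈ Yᗮ) :
    Y = ⊥ ∨ Y = H2 ∨ Y = H2m ∨ Y = ⊤ := by
  haveI : CompleteSpace Y := hc.completeSpace_coe
  set Q : L2 → L2 := fun x => (Y.orthogonalProjectionOnto x : L2) with hQdef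
  have hmem : ∀ x, Q x ∈ Y := fun x => (Y.orthogonalProjectionOnto x).2
  have hid : ∀ x ∈ Y, Q x = x := fun x hx => Submodule.starProjection_eq_self_iff.2 hx
  have hQadd : ∀ u v, Q (u + v) = Q u + Q v := by
    intro u v; simp only [hQdef, map_add, Submodule.coe_add]
  have hQzero : Q 0 = 0 := by simp only [hQdef, map_zero, ZeroMemClass.coe_zero]
  have hQsmul : ∀ (c : ℂ) u, Q (c • u) = c • Q u := by
    intro c u; simp only [hQdef, _root_.map_smul, SetLike.val_smul]
  have hcomm : ∀ x, Q (D x) = D (Q x) := by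
    intro x
    have h1 : D x = D (Q x) + D (x - Q x) := by rw [← map_add]; congr 1; abel
    have h2 : Q (D (Q x)) = D (Q x) := hid _ (hY _ (hmem x))
    have h3 : Q (D (x - Q x)) = 0 := by
      have hm : D (x - Q x) ∈ Yᗮ := hY' _ (Submodule.sub_starProjection_mem_orthogonal (K := Y) x)
      have h4 := Submodule.orthogonalProjectionOnto_apply_of_mem_orthogonal hm
      simp only [hQdef] at h4 ⊢; rw [h4, ZeroMemClass.coe_zero]
    rw [h1, hQadd, h2, h3, add_zero]
  have hsa : ∀ u v, ⟪Q u, v⟫ = ⟪u, Q v⟫ := fun u v =>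
    Submodule.inner_starProjection_left_eq_right (K := Y) u v
  set p : ℤ → ℤ → ℂ := fun m n => ⟪e m, Q (e n)⟫ with hp
  have hconj : ∀ m n, p m n = (starRingEnd ℂ) (p n m) := by
    intro m n
    rw [hp]
    simp only
    rw [← inner_conj_symm, hsa]
  have hrel : ∀ m n : ℤ, n ≠ 0 → p m n = if m = 0 then 0 else p (m - 1) (n - 1) := by
    intro m n hn
    have he : e n = D (e (n - 1)) := by
      rw [D_e, if_neg (by omega : ¬ n - 1 = -1), sub_add_cancel]
    calc p m n = ⟪e m, Q (D (e (n - 1)))⟫ := by rw [hp]; simp only; rw [← he]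
      _ = ⟪e m, D (Q (e (n - 1)))⟫ := by rw [hcomm]
      _ = if m = 0 then 0 else ⟪e (m - 1), Q (e (n - 1))⟫ := inner_D _ _
      _ = if m = 0 then 0 else p (m - 1) (n - 1) := rfl
  have hcol : ∀ m : ℤ, m ≠ -1 → p m (-1) = 0 := by
    intro m hm
    have h0 : D (e (-1)) = (0 : L2) := by rw [D_e, if_pos rfl]
    have h5 : (0 : L2) = D (Q (e (-1))) := by rw [← hcomm, h0, hQzero]
    have h2 : (0 : ℂ) = ⟪e (m + 1), D (Q (e (-1)))⟫ := by rw [← h5, inner_zero_right]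
    rw [inner_D, if_neg (by omega : ¬ m + 1 = 0), add_sub_cancel_right] at h2
    exact h2.symm
  have hrow0 : ∀ n : ℤ, n ≠ 0 → p 0 n = 0 := fun n hn => by rw [hrel 0 n hn, if_pos rfl]
  have hrowm1 : ∀ n : ℤ, n ≠ -1 → p (-1) n = 0 := fun n hn => by
    rw [hconj, hcol n hn, map_zero]
  have hcol0 : ∀ m : ℤ, m ≠ 0 → p m 0 = 0 := fun m hm => by
    rw [hconj, hrow0 m hm, map_zero]
  -- off-diagonal entries vanish
  have hoff : ∀ m n : ℤ, m ≠ n → p m n = 0 := by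
    have key : ∀ m : ℤ, ∀ n : ℤ, m ≠ n → p m n = 0 := by
      intro m
      induction m using Int.induction_on with
      | zero => exact fun n hn => hrow0 n (Ne.symm hn)
      | succ i ih =>
        intro n hn
        by_cases h0 : n = 0
        · subst h0; exact hcol0 _ hn
        · rw [hrel _ n h0, if_neg (by omega : ¬ (i : ℤ) + 1 = 0), add_sub_cancel_right]
          exact ih (n - 1) (by omega)
      | pred i ih =>
        intro n hn
        by_cases hm1 : (-(i : ℤ) - 1) = -1
        · by_cases h0 : n = -1
          · omega
          · rw [hm1]; exact hrowm1 n h0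
        · by_cases h0 : n = -1
          · subst h0; exact hcol _ hm1
          · have h6 := hrel (-(i : ℤ)) (n + 1) (by omega)
            rw [if_neg (by omega : ¬ -(i : ℤ) = 0)] at h6
            have e1 : -(i : ℤ) - 1 = -(i : ℤ) - 1 := rfl
            have h7 : p (-(i : ℤ)) (n + 1) = p (-(i : ℤ) - 1) n := by
              rw [h6, add_sub_cancel_right]
            rw [← h7]
            exact ih (n + 1) (by omega)
    exact key
  -- diagonal entries
  have hdiag : ∀ m : ℤ, p m m = if 0 ≤ m then p 0 0 else p (-1) (-1) := by
    intro m
    induction m using Int.induction_on with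
    | zero => rw [if_pos le_rfl]
    | succ i ih =>
      have h := hrel ((i : ℤ) + 1) ((i : ℤ) + 1) (by omega)
      rw [if_neg (by omega : ¬ (i : ℤ) + 1 = 0)] at h
      rw [h, add_sub_cancel_right, ih, if_pos (by omega : (0:ℤ) ≤ (i : ℤ)),
        if_pos (by omega : (0:ℤ) ≤ (i : ℤ) + 1)]
    | pred i ih =>
      rw [if_neg (by omega : ¬ (0:ℤ) ≤ -(i : ℤ) - 1)]
      by_cases h0 : (i : ℤ) = 0
      · rw [h0]; norm_num
      · have h := hrel (-(i : ℤ)) (-(i : ℤ)) (by omega)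
        rw [if_neg (by omega : ¬ -(i : ℤ) = 0)] at h
        rw [← h, ih, if_neg (by omega : ¬ (0:ℤ) ≤ -(i : ℤ))]
  -- Q on basis vectors
  set a : ℂ := p 0 0 with ha
  set b : ℂ := p (-1) (-1) with hb
  have hQe : ∀ m : ℤ, Q (e m) = (if 0 ≤ m then a else b) • e m := by
    intro m
    apply ext_of_inner
    intro k
    rw [inner_smul_right, inner_e]
    by_cases hk : k = m
    · subst hk
      rw [if_pos rfl, mul_one]
      exact hdiag k
    · rw [if_neg hk, mul_zero]
      exact hoff k m hk
  -- the diagonal values are idempotent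
  have hQQ : ∀ x, Q (Q x) = Q x := fun x => hid _ (hmem x)
  have key : ∀ (m : ℤ) (c : ℂ), Q (e m) = c • e m → c = 0 ∨ c = 1 := by
    intro m c h
    have h2 : Q (Q (e m)) = Q (e m) := hQQ _
    rw [h, hQsmul, h, smul_smul] at h2
    have h3 : (c * c - c) • e m = 0 := by rw [sub_smul, h2, sub_self]
    rcases smul_eq_zero.1 h3 with h4 | h4
    · have h5 : c * (c - 1) = 0 := by rw [mul_sub, mul_one]; exact h4
      rcases mul_eq_zero.1 h5 with h6 | h6
      · exact Or.inl h6
      · exact Or.inr (by rwa [sub_eq_zero] at h6)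
    · exact absurd h4 (e_ne_zero m)
  have haor : a = 0 ∨ a = 1 := key 0 a (by rw [hQe 0, if_pos le_rfl])
  have hbor : b = 0 ∨ b = 1 := key (-1) b (by rw [hQe (-1), if_neg (by omega)])
  have hQx : ∀ (x : L2) (m : ℤ),
      ⟪e m, Q x⟫ = (starRingEnd ℂ) (if 0 ≤ m then a else b) * ⟪e m, x⟫ := by
    intro x m
    rw [← hsa, hQe m, inner_smul_left]
  rcases haor with ha0 | ha1 <;> rcases hbor with hb0 | hb1
  · -- a = 0, b = 0 : Y = ⊥
    left
    rw [eq_bot_iff]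
    intro x hx
    have h2 : Q x = 0 := by
      apply ext_of_inner
      intro m
      rw [hQx, ha0, hb0, ite_self, map_zero, zero_mul, inner_zero_right]
    exact (Submodule.mem_bot ℂ).2 (by rw [← hid x hx, h2])
  · -- a = 0, b = 1 : Y = H2m
    right; right; left
    have hQP : ∀ x, Q x = Pminus x := by
      intro x
      apply ext_of_inner
      intro m
      rw [hQx, inner_Pminus, ha0, hb1]
      by_cases h : 0 ≤ m
      · rw [if_pos h, if_neg (by omega : ¬ m < 0), map_zero, zero_mul]
      · rw [if_neg h, if_pos (by omega : m < 0), map_one, one_mul]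
    ext x
    constructor
    · intro hx
      have h1 : Pminus x = x := by rw [← hQP x]; exact hid x hx
      exact (Submodule.starProjection_eq_self_iff (K := H2m)).1 h1
    · intro hx
      have h1 : Q x = x := by
        rw [hQP x]
        exact (Submodule.starProjection_eq_self_iff (K := H2m)).2 hx
      rw [← h1]; exact hmem x
  · -- a = 1, b = 0 : Y = H2
    right; left
    have hQP : ∀ x, Q x = Pplus x := by
      intro x
      apply ext_of_inner
      intro m
      rw [hQx, inner_Pplus, ha1, hb0]
      by_cases h : 0 ≤ m
      · rw [if_pos h, if_pos h, map_one, one_mul]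
      · rw [if_neg h, if_neg h, map_zero, zero_mul]
    ext x
    constructor
    · intro hx
      have h1 : Pplus x = x := by rw [← hQP x]; exact hid x hx
      exact (Submodule.starProjection_eq_self_iff (K := H2)).1 h1
    · intro hx
      have h1 : Q x = x := by
        rw [hQP x]
        exact (Submodule.starProjection_eq_self_iff (K := H2)).2 hx
      rw [← h1]; exact hmem x
  · -- a = 1, b = 1 : Y = ⊤
    right; right; right
    rw [eq_top_iff]
    intro x _
    have h2 : Q x = x := by
      apply ext_of_inner
      intro m
      rw [hQx, ha1, hb1, ite_self, map_one, one_mul]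
    rw [← h2]; exact hmem x

end SS
end
end
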